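/- Let α_1(x) ≡ 1 and let {α_n}_{n≥2} be continuous complex-valued functions of x ∈ ℝ satisfying the Dirichlet convolution identity α_n(x+y) = ∑_{d∣n} α_d(x)·α_{n/d}(y) for all n ≥ 1 and all x, y ∈ ℝ. Then for every n ≥ 2 the function α_n coincides on ℝ with a polynomial of degree at most Ω(n), and this polynomial vanishes at 0. -/

import Mathlib

open Polynomial MeasureTheory intervalIntegral

noncomputable def antider (q : ℂ[X]) : ℂ[X] :=
  ∑ i ∈ Finset.range (q.natDegree + 1), C (q.coeff i / ((i : ℂ) + 1)) * X ^ (i + 1)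

lemma antider_derivative (q : ℂ[X]) : (antider q).derivative = q := by
  rw [antider, derivative_sum]
  conv_rhs => rw [q.as_sum_range' (q.natDegree + 1) (Nat.lt_succ_self _)]
  refine Finset.sum_congr rfl fun i _ => ?_
  rw [derivative_C_mul_X_pow, ← C_mul_X_pow_eq_monomial]
  have hne : ((i:ℂ)) + 1 ≠ 0 := by
    have h : (((i+1:ℕ)):ℂ) ≠ 0 := Nat.cast_ne_zero.mpr (Nat.succ_ne_zero i)
    push_cast at h; exact h
  congr 1
  push_cast
  rw [div_mul_cancel₀ _ hne]

lemma antider_eval_zero (q : ℂ[X]) : (antider q).eval 0 = 0 := by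
  simp [antider, eval_finset_sum]

lemma antider_natDegree (q : ℂ[X]) : (antider q).natDegree ≤ q.natDegree + 1 :=
  Polynomial.natDegree_sum_le_of_forall_le _ _ fun i hi =>
    (natDegree_C_mul_X_pow_le _ _).trans (Finset.mem_range.mp hi)

lemma one_le_cardFactors {m : ℕ} (hm : 2 ≤ m) : 1 ≤ ArithmeticFunction.cardFactors m := by
  obtain ⟨p, pp, hd⟩ := Nat.exists_prime_and_dvd (by omega : m ≠ 1)
  have h1 : m = p * (m / p) := (Nat.mul_div_cancel' hd).symm
  have h2 : m / p ≠ 0 := by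
    have := Nat.div_pos (Nat.le_of_dvd (by omega) hd) pp.pos
    omega
  calc 1 = ArithmeticFunction.cardFactors p := (ArithmeticFunction.cardFactors_apply_prime pp).symm
    _ ≤ ArithmeticFunction.cardFactors p + ArithmeticFunction.cardFactors (m / p) := Nat.le_add_right _ _
    _ = ArithmeticFunction.cardFactors m := by
        rw [← ArithmeticFunction.cardFactors_mul pp.pos.ne' h2, ← h1]

theorem stmt_1 (α : ℕ → ℝ → ℂ)
    (hα1 : ∀ x : ℝ, α 1 x = 1)
    (hcont : ∀ n : ℕ, 2 ≤ n → Continuous (α n))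
    (hconv : ∀ n : ℕ, 1 ≤ n → ∀ x y : ℝ,
      α n (x + y) = ∑ d ∈ n.divisors, α d x * α (n / d) y)
    (n : ℕ) (hn : 2 ≤ n) :
    ∃ p : Polynomial ℂ,
      p.degree ≤ (ArithmeticFunction.cardFactors n : ℕ) ∧
      p.eval 0 = 0 ∧
      ∀ x : ℝ, α n x = p.eval (x : ℂ) := by
  revert hn
  induction n using Nat.strong_induction_on with
  | _ n ih =>
  intro hn
  choose! P hPdeg hP0 hPev using ih
  have hn0 : n ≠ 0 := by omega
  set S : Finset ℕ := (n.divisors.erase 1).erase n with hS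
  have hSmem : ∀ d ∈ S, d ∣ n ∧ 2 ≤ d ∧ d < n := by
    intro d hd
    rw [hS, Finset.mem_erase, Finset.mem_erase, Nat.mem_divisors] at hd
    obtain ⟨hdn, hd1, hdvd, -⟩ := hd
    have hd0 : d ≠ 0 := by rintro rfl; exact hn0 (Nat.eq_zero_of_zero_dvd hdvd)
    exact ⟨hdvd, by omega, lt_of_le_of_ne (Nat.le_of_dvd (by omega) hdvd) hdn⟩
  have hSdiv : ∀ d ∈ S, n / d ∈ S := by
    intro d hd
    obtain ⟨hdvd, hd2, hdn⟩ := hSmem d hd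
    have hmul : d * (n / d) = n := Nat.mul_div_cancel' hdvd
    have hq2 : n / d ≠ 1 := by
      intro h; rw [h, mul_one] at hmul; omega
    have hqn : n / d ≠ n := by
      intro h; rw [h] at hmul
      have h2 : 2 * n ≤ d * n := Nat.mul_le_mul_right n hd2
      omega
    rw [hS, Finset.mem_erase, Finset.mem_erase, Nat.mem_divisors]
    exact ⟨hqn, hq2, Nat.div_dvd_of_dvd hdvd, hn0⟩
  -- key convolution identity
  have key : ∀ x y : ℝ, α n (x + y)
      = α n x + α n y + ∑ d ∈ S, (P d).eval (x:ℂ) * (P (n/d)).eval (y:ℂ) := by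
    intro x y
    rw [hconv n (by omega) x y]
    have h1 : (1:ℕ) ∈ n.divisors := Nat.one_mem_divisors.mpr hn0
    have hnn : n ∈ n.divisors.erase 1 :=
      Finset.mem_erase.mpr ⟨by omega, Nat.mem_divisors_self n hn0⟩
    rw [← Finset.add_sum_erase _ _ h1, ← Finset.add_sum_erase _ _ hnn]
    rw [Nat.div_one, Nat.div_self (by omega : 0 < n), hα1, hα1, one_mul, mul_one]
    rw [show ((n.divisors.erase 1).erase n) = S from hS.symm]
    rw [Finset.sum_congr rfl (fun d hd => ?_)]
    · ring
    · obtain ⟨_, hd2, hdn⟩ := hSmem d hd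
      obtain ⟨_, hq2, hqn⟩ := hSmem _ (hSdiv d hd)
      rw [hPev d hdn hd2 x, hPev (n/d) hqn hq2 y]
  have f0 : α n 0 = 0 := by
    have h := key 0 0
    rw [add_zero] at h
    have hz : ∑ d ∈ S, (P d).eval ((0:ℝ):ℂ) * (P (n/d)).eval ((0:ℝ):ℂ) = 0 :=
      Finset.sum_eq_zero fun d hd => by
        obtain ⟨_, hd2, hdn⟩ := hSmem d hd
        rw [Complex.ofReal_zero, hP0 d hdn hd2, zero_mul]
    rw [hz] at h
    linear_combination -h
  have contf : Continuous (α n) := hcont n hn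
  have contp : ∀ q : ℂ[X], Continuous fun t : ℝ => q.eval (t:ℂ) :=
    fun q => q.continuous.comp Complex.continuous_ofReal
  set C0 : ℂ := ∫ t in (0:ℝ)..1, α n t with hC0
  set c : ℕ → ℂ := fun d => ∫ t in (0:ℝ)..1, (P (n/d)).eval (t:ℂ) with hc
  have intid : ∀ x : ℝ, (∫ t in (0:ℝ)..1, α n (x + t))
      = α n x + C0 + ∑ d ∈ S, (P d).eval (x:ℂ) * c d := by
    intro x
    have h1 : (∫ t in (0:ℝ)..1, α n (x + t))
        = ∫ t in (0:ℝ)..1, (α n x + α n t + ∑ d ∈ S, (P d).eval (x:ℂ) * (P (n/d)).eval (t:ℂ)) := by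
      apply intervalIntegral.integral_congr
      intro t _
      exact key x t
    rw [h1]
    have i1 : IntervalIntegrable (fun t:ℝ => α n x + α n t) volume 0 1 :=
      (continuous_const.add contf).intervalIntegrable _ _
    have i2 : IntervalIntegrable
        (fun t:ℝ => ∑ d ∈ S, (P d).eval (x:ℂ) * (P (n/d)).eval (t:ℂ)) volume 0 1 :=
      (continuous_finset_sum _ fun d _ => continuous_const.mul (contp _)).intervalIntegrable _ _
    rw [intervalIntegral.integral_add i1 i2,
      intervalIntegral.integral_add (continuous_const.intervalIntegrable _ _)
        (contf.intervalIntegrable _ _),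
      intervalIntegral.integral_finset_sum
        (f := fun d (t:ℝ) => (P d).eval (x:ℂ) * (P (n/d)).eval (t:ℂ)) (s := S)
        (fun d _ => (continuous_const.mul (contp _)).intervalIntegrable _ _)]
    simp only [intervalIntegral.integral_const_mul, intervalIntegral.integral_const,
      sub_zero, one_smul]
    rfl
  have hAderiv : ∀ u : ℝ, HasDerivAt (fun v : ℝ => ∫ t in (0:ℝ)..v, α n t) (α n u) u := fun u =>
    intervalIntegral.integral_hasDerivAt_right (contf.intervalIntegrable _ _)
      (contf.stronglyMeasurableAtFilter _ _) contf.continuousAt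
  have shift : ∀ x : ℝ, (∫ t in (0:ℝ)..1, α n (x + t))
      = (∫ t in (0:ℝ)..(x+1), α n t) - ∫ t in (0:ℝ)..x, α n t := by
    intro x
    rw [intervalIntegral.integral_comp_add_left (fun t => α n t) x, add_zero]
    exact eq_sub_of_add_eq' (intervalIntegral.integral_add_adjacent_intervals
      (contf.intervalIntegrable 0 x) (contf.intervalIntegrable x (x+1)))
  set G : ℂ[X] := ∑ d ∈ S, Polynomial.C (c d) * P d with hG
  have hGeval : ∀ x : ℝ, G.eval (x:ℂ) = ∑ d ∈ S, (P d).eval (x:ℂ) * c d := by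
    intro x
    rw [hG, Polynomial.eval_finset_sum]
    exact Finset.sum_congr rfl fun d _ => by rw [Polynomial.eval_mul, Polynomial.eval_C]; ring
  have rep : ∀ x : ℝ, α n x
      = (∫ t in (0:ℝ)..(x+1), α n t) - (∫ t in (0:ℝ)..x, α n t) - C0 - G.eval (x:ℂ) := by
    intro x
    have h := intid x
    rw [shift x] at h
    rw [hGeval]
    linear_combination -h
  have hf' : ∀ x : ℝ, HasDerivAt (α n) (α n (x+1) - α n x - G.derivative.eval (x:ℂ)) x := by
    intro x
    have d1 : HasDerivAt (fun v : ℝ => ∫ t in (0:ℝ)..(v+1), α n t) (α n (x+1)) x :=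
      HasDerivAt.comp_add_const x 1 (hAderiv (x+1))
    have d2 := hAderiv x
    have d3 : HasDerivAt (fun v : ℝ => G.eval ((v:ℝ):ℂ)) (G.derivative.eval ((x:ℝ):ℂ)) x :=
      (G.hasDerivAt ((x:ℝ):ℂ)).comp_ofReal
    have := (((d1.sub d2).sub_const C0).sub d3)
    exact this.congr_of_eventuallyEq (Filter.Eventually.of_forall fun v => rep v)
  set q : ℂ[X] := Polynomial.C (α n 1)
      + (∑ d ∈ S, Polynomial.C ((P (n/d)).eval 1) * P d) - G.derivative with hq
  have hqeval : ∀ x : ℝ, α n (x+1) - α n x - G.derivative.eval (x:ℂ) = q.eval (x:ℂ) := by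
    intro x
    have hk := key x 1
    rw [show ((1:ℝ):ℂ) = 1 from Complex.ofReal_one] at hk
    rw [hq]
    simp only [Polynomial.eval_sub, Polynomial.eval_add, Polynomial.eval_C,
      Polynomial.eval_finset_sum, Polynomial.eval_mul]
    have hsum : ∑ d ∈ S, eval (1:ℂ) (P (n/d)) * eval (x:ℂ) (P d)
        = ∑ d ∈ S, eval (x:ℂ) (P d) * eval (1:ℂ) (P (n/d)) :=
      Finset.sum_congr rfl fun d _ => mul_comm _ _
    rw [hsum]
    linear_combination hk
  have hfq : ∀ x : ℝ, HasDerivAt (α n) (q.eval (x:ℂ)) x := fun x => (hqeval x) ▸ hf' x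
  have hzero : ∀ x : ℝ, HasDerivAt (fun t : ℝ => α n t - (antider q).eval ((t:ℝ):ℂ)) 0 x := by
    intro x
    have hd : HasDerivAt (fun t : ℝ => (antider q).eval ((t:ℝ):ℂ))
        ((antider q).derivative.eval ((x:ℝ):ℂ)) x :=
      ((antider q).hasDerivAt ((x:ℝ):ℂ)).comp_ofReal
    rw [antider_derivative] at hd
    have h2 := (hfq x).sub hd
    rw [sub_self] at h2
    exact h2
  have hconst : ∀ x : ℝ, α n x - (antider q).eval ((x:ℝ):ℂ)
      = α n 0 - (antider q).eval (((0:ℝ)):ℂ) := fun x =>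
    is_const_of_deriv_eq_zero (fun t => (hzero t).differentiableAt)
      (fun t => (hzero t).deriv) x 0
  -- degree bookkeeping
  have hmulΩ : ∀ d ∈ S, ArithmeticFunction.cardFactors d + ArithmeticFunction.cardFactors (n/d)
      = ArithmeticFunction.cardFactors n := by
    intro d hd
    obtain ⟨hdvd, hd2, hdn⟩ := hSmem d hd
    obtain ⟨-, hq2, -⟩ := hSmem _ (hSdiv d hd)
    rw [← ArithmeticFunction.cardFactors_mul (by omega : d ≠ 0) (by omega : n / d ≠ 0)]
    rw [Nat.mul_div_cancel' hdvd]
  have hΩn : 1 ≤ ArithmeticFunction.cardFactors n := one_le_cardFactors hn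
  have hdegP : ∀ d ∈ S, (P d).natDegree ≤ ArithmeticFunction.cardFactors n - 1 := by
    intro d hd
    obtain ⟨hdvd, hd2, hdn⟩ := hSmem d hd
    obtain ⟨-, hq2, hqn⟩ := hSmem _ (hSdiv d hd)
    have h1 := hmulΩ d hd
    have h2 : 1 ≤ ArithmeticFunction.cardFactors (n/d) := one_le_cardFactors (by
      have := hSmem _ (hSdiv d hd); omega)
    have h3 : (P d).natDegree ≤ ArithmeticFunction.cardFactors d :=
      Polynomial.natDegree_le_iff_degree_le.mpr (hPdeg d hdn hd2)
    omega
  have hdegG : G.natDegree ≤ ArithmeticFunction.cardFactors n - 1 := by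
    rw [hG]
    exact Polynomial.natDegree_sum_le_of_forall_le _ _ fun d hd =>
      (Polynomial.natDegree_C_mul_le _ _).trans (hdegP d hd)
  have hdegq : q.natDegree ≤ ArithmeticFunction.cardFactors n - 1 := by
    rw [hq]
    refine (Polynomial.natDegree_sub_le _ _).trans (max_le ?_ ?_)
    · refine (Polynomial.natDegree_add_le _ _).trans (max_le ?_ ?_)
      · simp
      · exact Polynomial.natDegree_sum_le_of_forall_le _ _ fun d hd =>
          (Polynomial.natDegree_C_mul_le _ _).trans (hdegP d hd)
    · exact (Polynomial.natDegree_derivative_le G).trans ((Nat.sub_le _ _).trans hdegG)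
  refine ⟨antider q, ?_, antider_eval_zero q, fun x => ?_⟩
  · apply Polynomial.natDegree_le_iff_degree_le.mp
    have := antider_natDegree q
    omega
  · have h := hconst x
    rw [f0, Complex.ofReal_zero, antider_eval_zero, sub_zero] at h
    exact sub_eq_zero.mp h
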